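/- (Lemma 2.3) Let μ ≥ 0, 0 < a_1 ≤ a, and let u ∈ S(a_1) satisfy I_{μ,T}(u) < 0. Then [u] < R_0. Moreover, there exists δ > 0 such that every v ∈ ℋ with ‖v − u‖_ℋ < δ and ‖v‖_2² ≤ a satisfies I_{μ,T}(v) = I_μ(v). -/

import Mathlib

open MeasureTheory Filter Set Topology
open scoped ENNReal

noncomputable section

abbrev EN (N : ℕ) := EuclideanSpace ℝ (Fin N)

/-- squared Gagliardo seminorm `[u]²` (as an extended nonnegative real). -/
def gagSq (N : ℕ) (s : ℝ) (u : EN N → ℝ) : ℝ≥0∞ :=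
  ∫⁻ x, ∫⁻ y, ENNReal.ofReal ((u x - u y) ^ 2 / ‖x - y‖ ^ ((N : ℝ) + 2 * s))

/-- squared Gagliardo seminorm `[u]²` as a real number. -/
def gagSqR (N : ℕ) (s : ℝ) (u : EN N → ℝ) : ℝ := (gagSq N s u).toReal

/-- the Gagliardo seminorm `[u]`. -/
def gagNorm (N : ℕ) (s : ℝ) (u : EN N → ℝ) : ℝ := Real.sqrt (gagSqR N s u)

/-- `‖u‖₂²`. -/
def l2sq (N : ℕ) (u : EN N → ℝ) : ℝ := ∫ x, (u x) ^ 2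

/-- membership in the fractional Sobolev space `ℋ = H^s`. -/
def memH (N : ℕ) (s : ℝ) (u : EN N → ℝ) : Prop :=
  MemLp u 2 (volume : Measure (EN N)) ∧ gagSq N s u < ⊤

/-- the sphere `S(c) = {u ∈ ℋ : ‖u‖₂² = c}`. -/
def msphere (N : ℕ) (s c : ℝ) : Set (EN N → ℝ) := {u | memH N s u ∧ l2sq N u = c}

/-- the nonlocal term `∫∫ |u(x)|^t |u(y)|^t / |x-y|^{N-α}`; `Q = nlterm N α q`, `P = nlterm N α p`. -/
def nlterm (N : ℕ) (α t : ℝ) (u : EN N → ℝ) : ℝ :=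
  (∫⁻ x, ∫⁻ y, ENNReal.ofReal (|u x| ^ t * |u y| ^ t / ‖x - y‖ ^ ((N : ℝ) - α))).toReal

/-- `‖u‖_ℋ² = [u]² + ‖u‖₂²`. -/
def hNormSq (N : ℕ) (s : ℝ) (u : EN N → ℝ) : ℝ := gagSqR N s u + l2sq N u

/-- `γ_t = (Nt − N − α)/(2ts)`. -/
def gam (N : ℕ) (s α t : ℝ) : ℝ := ((N : ℝ) * t - N - α) / (2 * t * s)

/-- the functional `I_μ`. -/
def Ifun (N : ℕ) (s α q p μ : ℝ) (u : EN N → ℝ) : ℝ :=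
  gagSqR N s u / 2 + μ / 2 * l2sq N u - nlterm N α q u / (2 * q) - nlterm N α p u / (2 * p)

/-- the truncated functional `I_{μ,T}`. -/
def ITfun (N : ℕ) (s α q p μ : ℝ) (τ : ℝ → ℝ) (u : EN N → ℝ) : ℝ :=
  gagSqR N s u / 2 + μ / 2 * l2sq N u - nlterm N α q u / (2 * q)
    - τ (gagNorm N s u) * nlterm N α p u / (2 * p)

/-- the functional `J_ε`. -/
def Jfun (N : ℕ) (s α q p : ℝ) (V : EN N → ℝ) (ε : ℝ) (u : EN N → ℝ) : ℝ :=
  gagSqR N s u / 2 + (∫ x, V (ε • x) * (u x) ^ 2) / 2 - nlterm N α q u / (2 * q)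
    - nlterm N α p u / (2 * p)

/-- the truncated functional `J_{ε,T}`. -/
def JTfun (N : ℕ) (s α q p : ℝ) (V : EN N → ℝ) (ε : ℝ) (τ : ℝ → ℝ) (u : EN N → ℝ) : ℝ :=
  gagSqR N s u / 2 + (∫ x, V (ε • x) * (u x) ^ 2) / 2 - nlterm N α q u / (2 * q)
    - τ (gagNorm N s u) * nlterm N α p u / (2 * p)

/-- the inner product of `ℋ`. -/
def Hinner (N : ℕ) (s : ℝ) (u v : EN N → ℝ) : ℝ :=
  (∫ x, ∫ y, (u x - u y) * (v x - v y) / ‖x - y‖ ^ ((N : ℝ) + 2 * s)) + ∫ x, u x * v x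

namespace Stmt9Aux

open MeasureTheory

/-- exp of a linear map is convex -/
lemma exp_convexOn (c : ℝ) : ConvexOn ℝ Set.univ (fun x : ℝ => Real.exp (c * x)) := by
  have h := convexOn_exp.comp_affineMap (LinearMap.toAffineMap (c • (LinearMap.id : ℝ →ₗ[ℝ] ℝ)))
  simpa [Function.comp_def, Pi.smul_apply, smul_eq_mul] using h

/-- abstract real-analysis core for part 1 -/
lemma core (A B c d R0 R1 r : ℝ) (hA : 0 < A) (hB : 0 < B) (hc : c < 0) (hd : 0 < d)
    (hR0 : 0 < R0) (h01 : R0 < R1)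
    (e0 : A * R0 ^ c + B * R0 ^ d = 1) (e1 : A * R1 ^ c + B * R1 ^ d = 1)
    (hr : R0 ≤ r)
    (h2 : r ≤ R1 → 1 < A * r ^ c + B * r ^ d)
    (h3 : R1 ≤ r → 1 < A * r ^ c) : False := by
  have hrpos : 0 < r := lt_of_lt_of_le hR0 hr
  rcases le_or_gt r R1 with hle | hgt
  · have hconv : ConvexOn ℝ Set.univ (fun x : ℝ => A * Real.exp (c * x) + B * Real.exp (d * x)) :=
      ((exp_convexOn c).smul hA.le).add ((exp_convexOn d).smul hB.le)
    have hseg : Real.log r ∈ segment ℝ (Real.log R0) (Real.log R1) := by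
      rw [segment_eq_Icc (Real.log_le_log hR0 h01.le)]
      exact ⟨Real.log_le_log hR0 hr, Real.log_le_log hrpos hle⟩
    have hmax := hconv.le_on_segment (Set.mem_univ (Real.log R0)) (Set.mem_univ (Real.log R1)) hseg
    have key : ∀ x : ℝ, 0 < x →
        A * Real.exp (c * Real.log x) + B * Real.exp (d * Real.log x) = A * x ^ c + B * x ^ d := by
      intro x hx
      rw [Real.rpow_def_of_pos hx c, Real.rpow_def_of_pos hx d, mul_comm (Real.log x) c,
        mul_comm (Real.log x) d]
    rw [key r hrpos, key R0 hR0, key R1 (lt_trans hR0 h01), e0, e1, max_self] at hmax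
    exact absurd hmax (not_le.2 (h2 hle))
  · have h3' := h3 hgt.le
    have hstep : r ^ c ≤ R1 ^ c :=
      Real.rpow_le_rpow_of_nonpos (lt_trans hR0 h01) hgt.le hc.le
    have hBR : 0 ≤ B * R1 ^ d :=
      mul_nonneg hB.le (Real.rpow_nonneg (le_of_lt (lt_trans hR0 h01)) _)
    linarith only [h3', e1, hBR, mul_le_mul_of_nonneg_left hstep hA.le]

end Stmt9Aux

namespace Stmt9Aux

open MeasureTheory

def G (N : ℕ) (s : ℝ) (w : EN N → ℝ) : EN N × EN N → ℝ :=
  fun z => (w z.1 - w z.2) / ‖z.1 - z.2‖ ^ (((N : ℝ) + 2 * s) / 2)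

def S (N : ℕ) (s : ℝ) (w : EN N → ℝ) : ℝ≥0∞ :=
  ∫⁻ z, ENNReal.ofReal ((G N s w z) ^ 2) ∂((volume : Measure (EN N)).prod volume)

lemma aemeas_G (N : ℕ) (s : ℝ) (w : EN N → ℝ) (hw : AEMeasurable w (volume : Measure (EN N))) :
    AEMeasurable (G N s w) ((volume : Measure (EN N)).prod volume) := by
  have h1 : AEMeasurable (fun z : EN N × EN N => w z.1) ((volume : Measure (EN N)).prod volume) :=
    hw.comp_quasiMeasurePreserving Measure.quasiMeasurePreserving_fst
  have h2 : AEMeasurable (fun z : EN N × EN N => w z.2) ((volume : Measure (EN N)).prod volume) :=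
    hw.comp_quasiMeasurePreserving Measure.quasiMeasurePreserving_snd
  have h3 : Measurable (fun z : EN N × EN N => ‖z.1 - z.2‖ ^ (((N : ℝ) + 2 * s) / 2)) := by
    fun_prop
  exact (h1.sub h2).div h3.aemeasurable

lemma gagSq_eq_S (N : ℕ) (s : ℝ) (hNs : 0 ≤ (N : ℝ) + 2 * s) (w : EN N → ℝ)
    (hw : AEMeasurable w (volume : Measure (EN N))) :
    gagSq N s w = S N s w := by
  have hpt : ∀ x y : EN N, ENNReal.ofReal ((w x - w y) ^ 2 / ‖x - y‖ ^ ((N : ℝ) + 2 * s))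
      = ENNReal.ofReal ((G N s w (x, y)) ^ 2) := by
    intro x y
    congr 1
    show (w x - w y) ^ 2 / ‖x - y‖ ^ ((N : ℝ) + 2 * s)
      = ((w x - w y) / ‖x - y‖ ^ (((N : ℝ) + 2 * s) / 2)) ^ 2
    rw [div_pow]
    congr 1
    rw [← Real.rpow_natCast (‖x - y‖ ^ (((N : ℝ) + 2 * s) / 2)) 2,
      ← Real.rpow_mul (norm_nonneg _)]
    congr 1
    push_cast
    ring
  unfold gagSq
  simp only [hpt]
  rw [lintegral_lintegral (f := fun x y => ENNReal.ofReal ((G N s w (x, y)) ^ 2))]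
  · rfl
  · have : AEMeasurable (fun z : EN N × EN N => ENNReal.ofReal ((G N s w z) ^ 2))
        ((volume : Measure (EN N)).prod volume) :=
      ENNReal.measurable_ofReal.comp_aemeasurable ((aemeas_G N s w hw).pow_const 2)
    exact this

lemma L2tri {β : Type*} [MeasurableSpace β] (μ : Measure β) (f g : β → ℝ)
    (hf : AEMeasurable f μ) (hg : AEMeasurable g μ) :
    (∫⁻ z, ENNReal.ofReal ((f z + g z) ^ 2) ∂μ) ^ (1/2 : ℝ) ≤
      (∫⁻ z, ENNReal.ofReal (f z ^ 2) ∂μ) ^ (1/2 : ℝ) +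
      (∫⁻ z, ENNReal.ofReal (g z ^ 2) ∂μ) ^ (1/2 : ℝ) := by
  have habs : ∀ (h : β → ℝ) (z : β),
      (ENNReal.ofReal |h z|) ^ (2 : ℝ) = ENNReal.ofReal (h z ^ 2) := by
    intro h z
    rw [ENNReal.ofReal_rpow_of_nonneg (abs_nonneg _) (by norm_num)]
    congr 1
    rw [show (2:ℝ) = ((2:ℕ):ℝ) from by norm_num, Real.rpow_natCast, sq_abs]
  have key : ∀ z, ENNReal.ofReal ((f z + g z) ^ 2) ≤
      (ENNReal.ofReal |f z| + ENNReal.ofReal |g z|) ^ (2 : ℝ) := by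
    intro z
    rw [← ENNReal.ofReal_add (abs_nonneg _) (abs_nonneg _),
      ENNReal.ofReal_rpow_of_nonneg (by positivity) (by norm_num)]
    apply ENNReal.ofReal_le_ofReal
    rw [show (2:ℝ) = ((2:ℕ):ℝ) from by norm_num, Real.rpow_natCast]
    nlinarith [abs_add_le (f z) (g z), sq_abs (f z + g z), abs_nonneg (f z + g z),
      abs_nonneg (f z), abs_nonneg (g z)]
  have hf' : AEMeasurable (fun z => ENNReal.ofReal |f z|) μ :=
    ENNReal.measurable_ofReal.comp_aemeasurable
      (continuous_abs.measurable.comp_aemeasurable hf)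
  have hg' : AEMeasurable (fun z => ENNReal.ofReal |g z|) μ :=
    ENNReal.measurable_ofReal.comp_aemeasurable
      (continuous_abs.measurable.comp_aemeasurable hg)
  calc (∫⁻ z, ENNReal.ofReal ((f z + g z) ^ 2) ∂μ) ^ (1/2 : ℝ)
      ≤ (∫⁻ z, (ENNReal.ofReal |f z| + ENNReal.ofReal |g z|) ^ (2:ℝ) ∂μ) ^ (1/2 : ℝ) :=
        ENNReal.rpow_le_rpow (lintegral_mono key) (by norm_num)
    _ ≤ (∫⁻ z, (ENNReal.ofReal |f z|) ^ (2:ℝ) ∂μ) ^ (1/2 : ℝ) +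
        (∫⁻ z, (ENNReal.ofReal |g z|) ^ (2:ℝ) ∂μ) ^ (1/2 : ℝ) :=
        ENNReal.lintegral_Lp_add_le hf' hg' one_le_two
    _ = (∫⁻ z, ENNReal.ofReal (f z ^ 2) ∂μ) ^ (1/2 : ℝ) +
        (∫⁻ z, ENNReal.ofReal (g z ^ 2) ∂μ) ^ (1/2 : ℝ) := by
        simp only [habs]

lemma gagNorm_eq (N : ℕ) (s : ℝ) (hNs : 0 ≤ (N : ℝ) + 2 * s) (f : EN N → ℝ)
    (hf : AEMeasurable f (volume : Measure (EN N))) :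
    gagNorm N s f = ((S N s f) ^ (1/2 : ℝ)).toReal := by
  unfold gagNorm gagSqR
  rw [gagSq_eq_S N s hNs f hf, ← ENNReal.toReal_rpow, Real.sqrt_eq_rpow]

lemma gagNorm_triangle (N : ℕ) (s : ℝ) (hNs : 0 ≤ (N : ℝ) + 2 * s) (u v : EN N → ℝ)
    (hu : AEMeasurable u (volume : Measure (EN N))) (hv : AEMeasurable v volume)
    (hfu : gagSq N s u < ⊤) (hfv : gagSq N s v < ⊤) :
    gagNorm N s v ≤ gagNorm N s u + gagNorm N s (fun x => v x - u x) := by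
  set w : EN N → ℝ := fun x => v x - u x with hwdef
  have hwm : AEMeasurable w volume := hv.sub hu
  have hGu := aemeas_G N s u hu
  have hGv := aemeas_G N s v hv
  have hGw := aemeas_G N s w hwm
  have hSu_ne : S N s u ≠ ⊤ := by rw [← gagSq_eq_S N s hNs u hu]; exact hfu.ne
  have hSv_ne : S N s v ≠ ⊤ := by rw [← gagSq_eq_S N s hNs v hv]; exact hfv.ne
  have hGid : ∀ z, G N s v z = G N s u z + G N s w z := by
    intro z
    unfold G
    rw [← add_div]
    congr 1
    show v z.1 - v z.2 = (u z.1 - u z.2) + ((v z.1 - u z.1) - (v z.2 - u z.2))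
    ring
  have htri0 : (S N s v) ^ (1/2 : ℝ) ≤ (S N s u) ^ (1/2 : ℝ) + (S N s w) ^ (1/2 : ℝ) := by
    have h := L2tri ((volume : Measure (EN N)).prod volume) (G N s u) (G N s w) hGu hGw
    unfold S
    simp only [hGid]
    exact h
  have hSw_ne : S N s w ≠ ⊤ := by
    intro htop
    have h := L2tri ((volume : Measure (EN N)).prod volume) (G N s v)
      (fun z => - G N s u z) hGv hGu.neg
    simp only [neg_sq] at h
    have hpt : ∀ z, ENNReal.ofReal ((G N s v z + - G N s u z) ^ 2)
        = ENNReal.ofReal ((G N s w z) ^ 2) := by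
      intro z
      rw [show G N s v z + -G N s u z = G N s w z from by have := hGid z; linarith]
    simp only [hpt] at h
    have h' : (S N s w) ^ (1/2 : ℝ) ≤ (S N s v) ^ (1/2 : ℝ) + (S N s u) ^ (1/2 : ℝ) := h
    rw [htop, ENNReal.top_rpow_of_pos (by norm_num), top_le_iff] at h'
    have hfin : (S N s v) ^ (1/2 : ℝ) + (S N s u) ^ (1/2 : ℝ) < ⊤ :=
      ENNReal.add_lt_top.2 ⟨ENNReal.rpow_lt_top_of_nonneg (by norm_num) hSv_ne,
        ENNReal.rpow_lt_top_of_nonneg (by norm_num) hSu_ne⟩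
    exact hfin.ne h'
  rw [gagNorm_eq N s hNs v hv, gagNorm_eq N s hNs u hu, gagNorm_eq N s hNs w hwm]
  rw [← ENNReal.toReal_add (ENNReal.rpow_ne_top_of_nonneg (by norm_num) hSu_ne)
    (ENNReal.rpow_ne_top_of_nonneg (by norm_num) hSw_ne)]
  exact ENNReal.toReal_mono (ENNReal.add_ne_top.2
    ⟨ENNReal.rpow_ne_top_of_nonneg (by norm_num) hSu_ne,
     ENNReal.rpow_ne_top_of_nonneg (by norm_num) hSw_ne⟩) htri0

end Stmt9Aux

set_option maxHeartbeats 1000000 in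
/-- Lemma 2.3: if `u ∈ S(a₁)` and `I_{μ,T}(u) < 0` then `[u] < R₀`, and
`I_{μ,T} = I_μ` near `u` among functions with `‖v‖₂² ≤ a`. -/
theorem stmt9
    (N : ℕ) (s α q p a Cq Cp : ℝ)
    (hs0 : 0 < s) (hs1 : s < 1) (hN : 2 * s < (N : ℝ))
    (hα0 : 0 < α) (hαN : α < (N : ℝ))
    (hq1 : ((N : ℝ) + α) / N < q) (hq2 : q < ((N : ℝ) + 2 * s + α) / N)
    (hp1 : ((N : ℝ) + 2 * s + α) / N < p) (hp2 : p ≤ ((N : ℝ) + α) / ((N : ℝ) - 2 * s))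
    (ha : 0 < a) (hCq : 0 < Cq) (hCp : 0 < Cp)
    (hGNq : ∀ u, memH N s u → nlterm N α q u ≤
      Cq * gagNorm N s u ^ (2 * q * gam N s α q) *
        Real.sqrt (l2sq N u) ^ (2 * q * (1 - gam N s α q)))
    (hGNp : ∀ u, memH N s u → nlterm N α p u ≤
      Cp * gagNorm N s u ^ (2 * p * gam N s α p) *
        Real.sqrt (l2sq N u) ^ (2 * p * (1 - gam N s α p)))
    (K E : ℝ)
    (hK : K = (p * gam N s α p - q * gam N s α q) / (1 - q * gam N s α q) *
      ((1 - q * gam N s α q) / (p * gam N s α p - 1)) ^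
        ((p * gam N s α p - 1) / (p * gam N s α p - q * gam N s α q)) *
      (Cq / q) ^ ((p * gam N s α p - 1) / (p * gam N s α p - q * gam N s α q)) *
      (Cp / p) ^ ((1 - q * gam N s α q) / (p * gam N s α p - q * gam N s α q)))
    (hE : E = (q * (1 - gam N s α q) * (p * gam N s α p - 1) +
      p * (1 - gam N s α p) * (1 - q * gam N s α q)) / (p * gam N s α p - q * gam N s α q))
    (h14 : K * a ^ E < 1)
    (w : ℝ → ℝ)
    (hw : ∀ r : ℝ, w r = 1 - Cq / q * a ^ (q * (1 - gam N s α q)) * r ^ (2 * q * gam N s α q - 2)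
      - Cp / p * a ^ (p * (1 - gam N s α p)) * r ^ (2 * p * gam N s α p - 2))
    (R0 R1 : ℝ) (hR0 : 0 < R0) (hR01 : R0 < R1) (hwR0 : w R0 = 0) (hwR1 : w R1 = 0)
    (τ : ℝ → ℝ) (hτsm : ContDiff ℝ (⊤ : ℕ∞) τ) (hτanti : AntitoneOn τ (Ici 0))
    (hτ01 : ∀ r : ℝ, 0 ≤ r → τ r ∈ Icc (0 : ℝ) 1)
    (hτone : ∀ r ∈ Icc (0 : ℝ) R0, τ r = 1) (hτzero : ∀ r : ℝ, R1 ≤ r → τ r = 0)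
    (μ a1 : ℝ) (hμ : 0 ≤ μ) (ha1 : 0 < a1) (ha1a : a1 ≤ a)
    (u : EN N → ℝ) (hu : u ∈ msphere N s a1) (hIu : ITfun N s α q p μ τ u < 0) :
    gagNorm N s u < R0 ∧
    ∃ δ : ℝ, 0 < δ ∧ ∀ v : EN N → ℝ, memH N s v →
      Real.sqrt (hNormSq N s (fun x => v x - u x)) < δ → l2sq N v ≤ a →
      ITfun N s α q p μ τ v = Ifun N s α q p μ v := by
  obtain ⟨⟨huL2, huGag⟩, hul2⟩ := hu
  have hNpos : (0:ℝ) < N := lt_trans (by linarith only [hs0]) hN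
  have hN2s : (0:ℝ) < (N:ℝ) - 2*s := by linarith only [hN]
  have h1q : (1:ℝ) < q := lt_trans ((one_lt_div hNpos).2 (by linarith only [hα0])) hq1
  have hq0 : (0:ℝ) < q := by linarith only [h1q]
  have h1p : (1:ℝ) < p := by
    have h := (one_lt_div hNpos).2 (show (N:ℝ) < N + 2*s + α by linarith only [hs0, hα0])
    linarith only [lt_trans h hp1]
  have hp0 : (0:ℝ) < p := by linarith only [h1p]
  have hqgq : q * gam N s α q = ((N:ℝ)*q - N - α) / (2*s) := by
    unfold gam; field_simp
  have hpgp : p * gam N s α p = ((N:ℝ)*p - N - α) / (2*s) := by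
    unfold gam; field_simp
  have hNq : (N:ℝ) + α < N * q := by
    linarith only [(div_lt_iff₀ hNpos).1 hq1]
  have hNq2 : q * (N:ℝ) < N + 2*s + α := (lt_div_iff₀ hNpos).1 hq2
  have hNp1 : (N:ℝ) + 2*s + α < p * N := (div_lt_iff₀ hNpos).1 hp1
  have hNp2 : p * ((N:ℝ) - 2*s) ≤ N + α := (le_div_iff₀ hN2s).1 hp2
  have hqgq_pos : 0 < q * gam N s α q := by
    rw [hqgq]; exact div_pos (by linarith only [hNq]) (by linarith only [hs0])
  have hqgq_lt1 : q * gam N s α q < 1 := by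
    rw [hqgq, div_lt_one (by linarith only [hs0])]; linarith only [hNq2]
  have hpgp_gt1 : 1 < p * gam N s α p := by
    rw [hpgp]; rw [lt_div_iff₀ (by linarith only [hs0] : (0:ℝ) < 2*s)]
    linarith only [hNp1]
  have hpgp_lep : p * gam N s α p ≤ p := by
    rw [hpgp, div_le_iff₀ (by linarith only [hs0] : (0:ℝ) < 2*s)]; linarith only [hNp2]
  have heq_pos : 0 < q * (1 - gam N s α q) := by
    have h : q * (1 - gam N s α q) = q - q * gam N s α q := by ring
    rw [h]; linarith only [hqgq_lt1, h1q]
  have hep_nonneg : 0 ≤ p * (1 - gam N s α p) := by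
    have h : p * (1 - gam N s α p) = p - p * gam N s α p := by ring
    rw [h]; linarith only [hpgp_lep]
  set r := gagNorm N s u with hrdef
  have hrnn : 0 ≤ r := Real.sqrt_nonneg _
  have hr2 : r ^ 2 = gagSqR N s u := Real.sq_sqrt ENNReal.toReal_nonneg
  have hQnn : 0 ≤ nlterm N α q u := ENNReal.toReal_nonneg
  have hPnn : 0 ≤ nlterm N α p u := ENNReal.toReal_nonneg
  -- GN-derived bounds
  have hGNq' := hGNq u ⟨huL2, huGag⟩
  have hGNp' := hGNp u ⟨huL2, huGag⟩
  rw [hul2, ← hrdef] at hGNq' hGNp'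
  have hsaq : Real.sqrt a1 ^ (2*q*(1 - gam N s α q)) = a1 ^ (q * (1 - gam N s α q)) := by
    rw [Real.sqrt_eq_rpow, ← Real.rpow_mul ha1.le]
    congr 1; ring
  have hsap : Real.sqrt a1 ^ (2*p*(1 - gam N s α p)) = a1 ^ (p * (1 - gam N s α p)) := by
    rw [Real.sqrt_eq_rpow, ← Real.rpow_mul ha1.le]
    congr 1; ring
  rw [hsaq] at hGNq'
  rw [hsap] at hGNp'
  have hQ2 : nlterm N α q u ≤ Cq * r ^ (2*q*gam N s α q) * a ^ (q * (1 - gam N s α q)) := by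
    refine hGNq'.trans ?_
    exact mul_le_mul_of_nonneg_left (Real.rpow_le_rpow ha1.le ha1a heq_pos.le)
      (mul_nonneg hCq.le (Real.rpow_nonneg hrnn _))
  have hP2 : nlterm N α p u ≤ Cp * r ^ (2*p*gam N s α p) * a ^ (p * (1 - gam N s α p)) := by
    refine hGNp'.trans ?_
    exact mul_le_mul_of_nonneg_left (Real.rpow_le_rpow ha1.le ha1a hep_nonneg)
      (mul_nonneg hCp.le (Real.rpow_nonneg hrnn _))
  -- Part 1
  have hmain : r < R0 := by
    by_contra hcon
    push_neg at hcon
    have hrpos : 0 < r := lt_of_lt_of_le hR0 hcon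
    have hr2pos : 0 < r ^ 2 := by positivity
    have hτr := hτ01 r hrnn
    have hK1 : r ^ 2 < nlterm N α q u / q + τ r * nlterm N α p u / p := by
      have h0 : 0 ≤ μ / 2 * l2sq N u := by
        rw [hul2]; exact mul_nonneg (by linarith only [hμ]) ha1.le
      have e1 : nlterm N α q u / (2*q) = nlterm N α q u / q / 2 := by ring
      have e2 : τ r * nlterm N α p u / (2*p) = τ r * nlterm N α p u / p / 2 := by ring
      unfold ITfun at hIu
      rw [← hrdef, ← hr2] at hIu
      linarith only [hIu, h0, e1, e2]
    have hsplitq : r ^ (2*q*gam N s α q) = r ^ (2*q*gam N s α q - 2) * r ^ 2 := by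
      rw [← Real.rpow_natCast r 2, ← Real.rpow_add hrpos]
      congr 1; push_cast; ring
    have hsplitp : r ^ (2*p*gam N s α p) = r ^ (2*p*gam N s α p - 2) * r ^ 2 := by
      rw [← Real.rpow_natCast r 2, ← Real.rpow_add hrpos]
      congr 1; push_cast; ring
    refine Stmt9Aux.core (Cq/q * a ^ (q * (1 - gam N s α q)))
      (Cp/p * a ^ (p * (1 - gam N s α p)))
      (2*q*gam N s α q - 2) (2*p*gam N s α p - 2) R0 R1 r
      (mul_pos (div_pos hCq hq0) (Real.rpow_pos_of_pos ha _))
      (mul_pos (div_pos hCp hp0) (Real.rpow_pos_of_pos ha _))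
      (by linarith only [hqgq_lt1]) (by linarith only [hpgp_gt1])
      hR0 hR01 ?_ ?_ hcon ?_ ?_
    · have h := hw R0; rw [hwR0] at h; linarith only [h]
    · have h := hw R1; rw [hwR1] at h; linarith only [h]
    · intro hle
      have hτle : τ r * nlterm N α p u / p ≤ nlterm N α p u / p := by
        exact div_le_div_of_nonneg_right (mul_le_of_le_one_left hPnn hτr.2) hp0.le
      have hQd : nlterm N α q u / q ≤
          (Cq/q * a ^ (q * (1 - gam N s α q))) * r ^ (2*q*gam N s α q) := by
        rw [show (Cq/q * a ^ (q * (1 - gam N s α q))) * r ^ (2*q*gam N s α q)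
          = (Cq * r ^ (2*q*gam N s α q) * a ^ (q * (1 - gam N s α q))) / q from by ring]
        exact div_le_div_of_nonneg_right hQ2 hq0.le
      have hPd : nlterm N α p u / p ≤
          (Cp/p * a ^ (p * (1 - gam N s α p))) * r ^ (2*p*gam N s α p) := by
        rw [show (Cp/p * a ^ (p * (1 - gam N s α p))) * r ^ (2*p*gam N s α p)
          = (Cp * r ^ (2*p*gam N s α p) * a ^ (p * (1 - gam N s α p))) / p from by ring]
        exact div_le_div_of_nonneg_right hP2 hp0.le
      have hchain : r ^ 2 <
          (Cq/q * a ^ (q * (1 - gam N s α q))) * (r ^ (2*q*gam N s α q - 2) * r ^ 2) +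
          (Cp/p * a ^ (p * (1 - gam N s α p))) * (r ^ (2*p*gam N s α p - 2) * r ^ 2) := by
        rw [← hsplitq, ← hsplitp]
        linarith only [hK1, hτle, hQd, hPd]
      have h5 : (1:ℝ) * r ^ 2 <
          ((Cq/q * a ^ (q * (1 - gam N s α q))) * r ^ (2*q*gam N s α q - 2) +
           (Cp/p * a ^ (p * (1 - gam N s α p))) * r ^ (2*p*gam N s α p - 2)) * r ^ 2 := by
        rw [one_mul]
        calc r ^ 2 < _ := hchain
        _ = _ := by ring
      exact lt_of_mul_lt_mul_right h5 hr2pos.le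
    · intro hge
      have hτ0 : τ r = 0 := hτzero r hge
      rw [hτ0] at hK1
      simp only [zero_mul, zero_div, add_zero] at hK1
      have hQd : nlterm N α q u / q ≤
          (Cq/q * a ^ (q * (1 - gam N s α q))) * (r ^ (2*q*gam N s α q - 2) * r ^ 2) := by
        rw [← hsplitq,
          show (Cq/q * a ^ (q * (1 - gam N s α q))) * r ^ (2*q*gam N s α q)
          = (Cq * r ^ (2*q*gam N s α q) * a ^ (q * (1 - gam N s α q))) / q from by ring]
        exact div_le_div_of_nonneg_right hQ2 hq0.le
      have h5 : (1:ℝ) * r ^ 2 <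
          ((Cq/q * a ^ (q * (1 - gam N s α q))) * r ^ (2*q*gam N s α q - 2)) * r ^ 2 := by
        rw [one_mul]
        calc r ^ 2 < _ := lt_of_lt_of_le hK1 hQd
        _ = _ := by ring
      exact lt_of_mul_lt_mul_right h5 hr2pos.le
  -- Part 2
  refine ⟨hmain, R0 - r, by linarith only [hmain], ?_⟩
  intro v hv hvd hva
  have hNs : (0:ℝ) ≤ (N:ℝ) + 2*s := by
    linarith only [hs0, (Nat.cast_nonneg N : (0:ℝ) ≤ N)]
  have haeu : AEMeasurable u (volume : Measure (EN N)) :=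
    huL2.aestronglyMeasurable.aemeasurable
  have haev : AEMeasurable v (volume : Measure (EN N)) :=
    hv.1.aestronglyMeasurable.aemeasurable
  have htri := Stmt9Aux.gagNorm_triangle N s hNs u v haeu haev huGag hv.2
  rw [← hrdef] at htri
  have hwle : gagNorm N s (fun x => v x - u x) ≤
      Real.sqrt (hNormSq N s (fun x => v x - u x)) := by
    have hl2 : 0 ≤ l2sq N (fun x => v x - u x) :=
      integral_nonneg (fun x => sq_nonneg _)
    unfold gagNorm hNormSq
    exact Real.sqrt_le_sqrt (le_add_of_nonneg_right hl2)
  have hvR0 : gagNorm N s v < R0 := by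
    have h1 : gagNorm N s (fun x => v x - u x) < R0 - r := lt_of_le_of_lt hwle hvd
    linarith only [htri, h1]
  have hτv : τ (gagNorm N s v) = 1 := hτone _ ⟨Real.sqrt_nonneg _, hvR0.le⟩
  simp only [ITfun, Ifun]
  rw [hτv]
  ring
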